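/- arXiv:1901.04186 — 5 statements merged into one kernel-verified Lean document; each statement's English description precedes it below -/
import Mathlib

section
/- The annihilator of the ring R = R_n(K,J) equals (Ann_K J)·e_{n,1}, i.e., a matrix A ∈ R satisfies AX = XA = 0 for all X ∈ R if and only if A = a·e_{n,1} for some a ∈ K with aJ = Ja = 0. -/
/-! Matrix units strictly below the diagonal lie in `R`, and testing an annihilator `A` against
`e_{k,1}` (`k > 1`) and `e_{n,i}` (`i < n`) kills every entry but `A_{n,1}`; testing against
`x • e_{k,k}` with `x ∈ J` shows that each entry annihilates `J`. Conversely `a • e_{n,1} * X` only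
sees the first row of `X` and `X * a • e_{n,1}` only its last column, both with entries in `J`. -/

open Matrix

/-- `R_n(K,J)`: the non-unital subring of `n × n` matrices over `K` whose entries on and
above the main diagonal lie in the two-sided ideal `J`. -/
def Rset (n : ℕ) (K : Type) [Ring K] (J : TwoSidedIdeal K) :
    NonUnitalSubring (Matrix (Fin n) (Fin n) K) where
  carrier := {M | ∀ i j : Fin n, i ≤ j → M i j ∈ J}
  zero_mem' := by intro i j _; simp [J.zero_mem]
  add_mem' := by intro a b ha hb i j h; exact J.add_mem (ha i j h) (hb i j h)
  neg_mem' := by intro a ha i j h; exact J.neg_mem (ha i j h)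
  mul_mem' := by
    intro a b ha hb i j h
    show (∑ k, a i k * b k j) ∈ J
    refine J.finsetSum_mem _ _ fun k _ => ?_
    rcases le_or_gt i k with hik | hik
    · exact J.mul_mem_right _ _ (ha i k hik)
    · exact J.mul_mem_left _ _ (hb k j (le_trans hik.le h))

lemma stdBasis_mem {n : ℕ} {K : Type} [Ring K] {J : TwoSidedIdeal K}
    {i j : Fin n} {y : K} (h : i ≤ j → y ∈ J) :
    Matrix.single i j y ∈ Rset n K J := by
  intro a b hab
  rw [Matrix.single]
  by_cases hc : i = a ∧ j = b
  · obtain ⟨rfl, rfl⟩ := hc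
    simpa using h hab
  · simp [Matrix.of_apply, if_neg hc, J.zero_mem]

namespace Rset

variable {n : ℕ} {K : Type} [Ring K] {J : TwoSidedIdeal K}

lemma single_mem_of_lt {i j : Fin n} (h : j < i) (y : K) : single i j y ∈ Rset n K J :=
  stdBasis_mem fun hij => absurd hij (not_le.2 h)

lemma single_mem_of_mem {i j : Fin n} {y : K} (hy : y ∈ J) : single i j y ∈ Rset n K J :=
  stdBasis_mem fun _ => hy

lemma single_mul_eq_zero {i z : Fin n} (hz : IsBot z) {a : K} (ha : ∀ x ∈ J, a * x = 0)
    {X : Matrix (Fin n) (Fin n) K} (hX : X ∈ Rset n K J) : single i z a * X = 0 := by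
  ext i' k
  rcases eq_or_ne i' i with rfl | hi
  · rw [single_mul_apply_same, Matrix.zero_apply]
    exact ha _ (hX z k (hz k))
  · rw [single_mul_apply_of_ne _ _ _ _ _ hi, Matrix.zero_apply]

lemma mul_single_eq_zero {m j : Fin n} (hm : IsTop m) {a : K} (ha : ∀ x ∈ J, x * a = 0)
    {X : Matrix (Fin n) (Fin n) K} (hX : X ∈ Rset n K J) : X * single m j a = 0 := by
  ext i k
  rcases eq_or_ne k j with rfl | hk
  · rw [mul_single_apply_same, Matrix.zero_apply]
    exact ha _ (hX i m (hm i))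
  · rw [mul_single_apply_of_ne _ _ _ _ _ hk, Matrix.zero_apply]

variable {A : Matrix (Fin n) (Fin n) K}

lemma entry_mul_eq_zero_and_mul_entry_eq_zero (h : ∀ X ∈ Rset n K J, A * X = 0 ∧ X * A = 0)
    {i k : Fin n} {x : K} (hx : x ∈ J) :
    A i k * x = 0 ∧ x * A i k = 0 := by
  constructor
  · simpa using congr_fun₂ (h _ (single_mem_of_mem (i := k) (j := k) hx)).1 i k
  · simpa using congr_fun₂ (h _ (single_mem_of_mem (i := i) (j := i) hx)).2 i k

lemma eq_single_of_annihilates (h : ∀ X ∈ Rset n K J, A * X = 0 ∧ X * A = 0)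
    {m z : Fin n} (hm : IsTop m) (hz : IsBot z) :
    A = single m z (A m z) := by
  ext i k
  rcases (hz k).eq_or_lt with rfl | hzk
  · rcases (hm i).eq_or_lt with rfl | him
    · simp
    · simpa [single_apply, him.ne'] using congr_fun₂ (h _ (single_mem_of_lt him 1)).2 m z
  · simpa [single_apply, hzk.ne] using congr_fun₂ (h _ (single_mem_of_lt hzk 1)).1 i z

end Rset

open Rset in
/-- The annihilator of `R = R_n(K,J)` equals `(Ann_K J)·e_{n,1}`: a matrix
`A ∈ R` satisfies `AX = XA = 0` for all `X ∈ R` iff `A = a·e_{n,1}` with `aJ = Ja = 0`. -/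
theorem annihilator_of_Rn (n : ℕ) (hn : 2 ≤ n) (K : Type) [Ring K] (J : TwoSidedIdeal K)
    (A : Matrix (Fin n) (Fin n) K) :
    (∀ X ∈ Rset n K J, A * X = 0 ∧ X * A = 0) ↔
      ∃ a : K, (∀ j ∈ J, a * j = 0 ∧ j * a = 0) ∧
        A = Matrix.single ⟨n - 1, by omega⟩ ⟨0, by omega⟩ a := by
  have hlast : IsTop (⟨n - 1, by omega⟩ : Fin n) := fun i => Fin.le_def.2 (Nat.le_sub_one_of_lt i.isLt)
  have hzero : IsBot (⟨0, by omega⟩ : Fin n) := fun i => Fin.le_def.2 (Nat.zero_le _)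
  constructor
  · intro h
    exact ⟨_, fun x hx => entry_mul_eq_zero_and_mul_entry_eq_zero h hx,
      eq_single_of_annihilates h hlast hzero⟩
  · rintro ⟨a, ha, rfl⟩ X hX
    exact ⟨single_mul_eq_zero hzero (fun x hx => (ha x hx).1) hX,
      mul_single_eq_zero hlast (fun x hx => (ha x hx).2) hX⟩
end

section
/- Let α, β, γ : J → Ann_K J be additive group homomorphisms with α(J²) = β(J²) = γ(J²) = 0, satisfying α(yx) = xα(y), β(yx) = xβ(y), β(xy) = β(y)x, and γ(xy) = γ(y)x for all x ∈ K, y ∈ J. Then the additive map Ω on R_n(K,J) defined on generators by Ω(y e_{1,n}) = α(y)e_{n-1,1} + β(y)e_{n-1,2} + γ(y)e_{n,2}, Ω(y e_{1,n-1}) = α(y)e_{n,1} + β(y)e_{n,2}, Ω(y e_{2,n-1}) = β(y)e_{n,1}, Ω(y e_{2,n}) = β(y)e_{n-1,1} + γ(y)e_{n,1}, and Ω(x e_{i,j}) = 0 on all other elementary matrices of R, is a Jordan derivation of R_n(K,J). -/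
open Matrix

/-!
Split `Ω = Ω_α + Ω_β + Ω_γ` according to the function involved. Each part is additive on `R` and
satisfies the reversed Leibniz rule `Ω(ab) = bΩ(a) + Ω(b)a`, and an additive map with this property
is a Jordan derivation. The reversed rule is a direct computation: `Ω(a)` has its entries in
`Ann_K J`, in rows `n - 1, n` and columns `1, 2`, so of `b` only `b_{21}` and `b_{n,n-1}` survive
in `Ω(a) b` and `b Ω(a)`; and since `α, β, γ` vanish on `J²`, only the products `a_{ik} b_{kj}`
with a factor outside `J` contribute to `α((ab)_{ij})`, `β((ab)_{ij})`, `γ((ab)_{ij})`.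
-/

structure IsAntiDerivationOn {A : Type*} [NonUnitalNonAssocRing A] (S : NonUnitalSubring A)
    (D : A → A) : Prop where
  map_mem : ∀ a ∈ S, D a ∈ S
  map_add : ∀ a ∈ S, ∀ b ∈ S, D (a + b) = D a + D b
  map_mul : ∀ a ∈ S, ∀ b ∈ S, D (a * b) = b * D a + D b * a

namespace IsAntiDerivationOn

variable {A : Type*} [NonUnitalNonAssocRing A] {S : NonUnitalSubring A} {D D' : A → A}

lemma add (h : IsAntiDerivationOn S D) (h' : IsAntiDerivationOn S D') :
    IsAntiDerivationOn S (D + D') where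
  map_mem a ha := add_mem (h.map_mem a ha) (h'.map_mem a ha)
  map_add a ha b hb := by
    simp only [Pi.add_apply, h.map_add a ha b hb, h'.map_add a ha b hb]
    abel
  map_mul a ha b hb := by
    simp only [Pi.add_apply, h.map_mul a ha b hb, h'.map_mul a ha b hb, mul_add, add_mul]
    abel

lemma map_mul_add_mul (h : IsAntiDerivationOn S D) {a b : A} (ha : a ∈ S) (hb : b ∈ S) :
    D (a * b + b * a) = D a * b + b * D a + a * D b + D b * a := by
  rw [h.map_add _ (S.mul_mem ha hb) _ (S.mul_mem hb ha), h.map_mul a ha b hb, h.map_mul b hb a ha]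
  abel

end IsAntiDerivationOn

namespace Matrix

variable {l m o α : Type*} [Fintype m] [DecidableEq l] [DecidableEq m] [DecidableEq o]
  [NonUnitalNonAssocSemiring α]

lemma single_mul_eq_single_of_forall_ne {i : l} {j : m} {k : o} {c : α} {M : Matrix m o α}
    (h : ∀ s ≠ k, c * M j s = 0) : single i j c * M = single i k (c * M j k) := by
  ext r s
  obtain rfl | hr := eq_or_ne r i
  · obtain rfl | hs := eq_or_ne s k
    · simp
    · simp [h s hs, single_apply_of_col_ne _ _ hs.symm]
  · simp [hr, single_apply_of_row_ne hr.symm]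

lemma mul_single_eq_single_of_forall_ne {i : m} {j : o} {k : l} {c : α} {M : Matrix l m α}
    (h : ∀ r ≠ k, M r i * c = 0) : M * single i j c = single k j (M k i * c) := by
  ext r s
  obtain rfl | hs := eq_or_ne s j
  · obtain rfl | hr := eq_or_ne r k
    · simp
    · simp [h r hr, single_apply_of_row_ne hr.symm]
  · simp [hs, single_apply_of_col_ne _ _ hs.symm]

end Matrix

/-- Indices of `Fin n` behaving like `0, 1, n - 2, n - 1` (the paper's `1, 2, n - 1, n`). -/
structure IsOuterIndices {n : ℕ} (z o p q : Fin n) : Prop where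
  first_le : ∀ k, z ≤ k
  second_le : ∀ k, k ≠ z → o ≤ k
  le_penult : ∀ k, k ≠ q → k ≤ p
  le_last : ∀ k, k ≤ q
  second_lt_penult : o < p

namespace IsOuterIndices

variable {n : ℕ} {z o p q : Fin n}

lemma first_lt_penult (hI : IsOuterIndices z o p q) : z < p :=
  (hI.first_le o).trans_lt hI.second_lt_penult

lemma second_lt_last (hI : IsOuterIndices z o p q) : o < q :=
  hI.second_lt_penult.trans_le (hI.le_last p)

lemma first_lt_last (hI : IsOuterIndices z o p q) : z < q :=
  hI.first_lt_penult.trans_le (hI.le_last p)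

end IsOuterIndices

section Rset

variable {n : ℕ} {K : Type} [Ring K] {J : TwoSidedIdeal K} {a b : Matrix (Fin n) (Fin n) K}

lemma single_mem_Rset_of_lt {i j : Fin n} (hji : j < i) (y : K) : single i j y ∈ Rset n K J :=
  stdBasis_mem fun hij => absurd hij hji.not_ge

lemma single_mul_eq_single_of_mem {i j k : Fin n} {v : K} (hv : ∀ t ∈ J, v * t = 0)
    (hb : b ∈ Rset n K J) (hk : ∀ s ≠ k, j ≤ s) : single i j v * b = single i k (v * b j k) :=
  single_mul_eq_single_of_forall_ne fun s hs => hv _ (hb j s (hk s hs))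

lemma single_mul_eq_zero_of_mem {i j : Fin n} {v : K} (hv : ∀ t ∈ J, v * t = 0)
    (hb : b ∈ Rset n K J) (hj : ∀ s, j ≤ s) : single i j v * b = 0 := by
  rw [single_mul_eq_single_of_mem hv hb fun s _ => hj s, hv _ (hb j j le_rfl), single_zero]

lemma mul_single_eq_single_of_mem {i j k : Fin n} {v : K} (hv : ∀ t ∈ J, t * v = 0)
    (hb : b ∈ Rset n K J) (hk : ∀ r ≠ k, r ≤ i) : b * single i j v = single k j (b k i * v) :=
  mul_single_eq_single_of_forall_ne fun r hr => hv _ (hb r i (hk r hr))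

lemma mul_single_eq_zero_of_mem {i j : Fin n} {v : K} (hv : ∀ t ∈ J, t * v = 0)
    (hb : b ∈ Rset n K J) (hi : ∀ r, r ≤ i) : b * single i j v = 0 := by
  rw [mul_single_eq_single_of_mem hv hb fun r _ => hi r, hv _ (hb i i le_rfl), single_zero]

variable {f : K → K}

lemma map_sum_of_mem (hadd : ∀ x ∈ J, ∀ y ∈ J, f (x + y) = f x + f y) {ι : Type*}
    (s : Finset ι) {g : ι → K} (hg : ∀ k, g k ∈ J) : f (∑ k ∈ s, g k) = ∑ k ∈ s, f (g k) := by
  have hf0 : f 0 = 0 := by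
    simpa using hadd 0 J.zero_mem 0 J.zero_mem
  exact (Finset.sum_hom_rel (r := fun x y => x ∈ J ∧ f x = y) ⟨J.zero_mem, hf0⟩
    fun k x y ⟨hx, hxy⟩ => ⟨J.add_mem (hg k) hx, by rw [hadd _ (hg k) _ hx, hxy]⟩).2

lemma map_mul_apply_eq_sum (hadd : ∀ x ∈ J, ∀ y ∈ J, f (x + y) = f x + f y)
    (hsq : ∀ x ∈ J, ∀ y ∈ J, f (x * y) = 0) (ha : a ∈ Rset n K J) (hb : b ∈ Rset n K J)
    {r c : Fin n} (hrc : r ≤ c) (s : Finset (Fin n)) (hs : ∀ k ∉ s, r ≤ k ∧ k ≤ c) :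
    f ((a * b) r c) = ∑ k ∈ s, f (a r k * b k c) := by
  have hmem : ∀ k, a r k * b k c ∈ J := fun k => (le_total r k).elim
    (fun h => J.mul_mem_right _ _ (ha r k h)) (fun h => J.mul_mem_left _ _ (hb k c (h.trans hrc)))
  rw [mul_apply, map_sum_of_mem hadd _ hmem]
  exact (Finset.sum_subset (Finset.subset_univ s) fun k _ hk =>
    hsq _ (ha r k (hs k hk).1) _ (hb k c (hs k hk).2)).symm

end Rset

section Corner

variable {n : ℕ} {K : Type} [Ring K] {J : TwoSidedIdeal K} {z o p q : Fin n} {f : K → K}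
  {a b : Matrix (Fin n) (Fin n) K}

lemma map_mul_apply_first_last (hadd : ∀ x ∈ J, ∀ y ∈ J, f (x + y) = f x + f y)
    (hsq : ∀ x ∈ J, ∀ y ∈ J, f (x * y) = 0) (hI : IsOuterIndices z o p q)
    (ha : a ∈ Rset n K J) (hb : b ∈ Rset n K J) : f ((a * b) z q) = 0 := by
  rw [map_mul_apply_eq_sum hadd hsq ha hb (hI.first_le q) ∅ fun k _ => ⟨hI.first_le k, hI.le_last k⟩,
    Finset.sum_empty]

lemma map_mul_apply_first_penult (hadd : ∀ x ∈ J, ∀ y ∈ J, f (x + y) = f x + f y)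
    (hsq : ∀ x ∈ J, ∀ y ∈ J, f (x * y) = 0) (hright : ∀ x, ∀ y ∈ J, f (y * x) = x * f y)
    (hI : IsOuterIndices z o p q) (ha : a ∈ Rset n K J) (hb : b ∈ Rset n K J) :
    f ((a * b) z p) = b q p * f (a z q) := by
  rw [map_mul_apply_eq_sum hadd hsq ha hb (hI.first_le p) {q}
      fun k hk => ⟨hI.first_le k, hI.le_penult k (Finset.notMem_singleton.1 hk)⟩,
    Finset.sum_singleton, hright _ _ (ha z q (hI.first_le q))]

lemma map_mul_apply_second_last (hadd : ∀ x ∈ J, ∀ y ∈ J, f (x + y) = f x + f y)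
    (hsq : ∀ x ∈ J, ∀ y ∈ J, f (x * y) = 0) (hleft : ∀ x, ∀ y ∈ J, f (x * y) = f y * x)
    (hI : IsOuterIndices z o p q) (ha : a ∈ Rset n K J) (hb : b ∈ Rset n K J) :
    f ((a * b) o q) = f (b z q) * a o z := by
  rw [map_mul_apply_eq_sum hadd hsq ha hb hI.second_lt_last.le {z}
      fun k hk => ⟨hI.second_le k (Finset.notMem_singleton.1 hk), hI.le_last k⟩,
    Finset.sum_singleton, hleft _ _ (hb z q (hI.first_le q))]

lemma map_mul_apply_second_penult (hadd : ∀ x ∈ J, ∀ y ∈ J, f (x + y) = f x + f y)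
    (hsq : ∀ x ∈ J, ∀ y ∈ J, f (x * y) = 0) (hright : ∀ x, ∀ y ∈ J, f (y * x) = x * f y)
    (hleft : ∀ x, ∀ y ∈ J, f (x * y) = f y * x) (hI : IsOuterIndices z o p q)
    (ha : a ∈ Rset n K J) (hb : b ∈ Rset n K J) :
    f ((a * b) o p) = f (b z p) * a o z + b q p * f (a o q) := by
  rw [map_mul_apply_eq_sum hadd hsq ha hb hI.second_lt_penult.le {z, q} fun k hk => by
      simp only [Finset.mem_insert, Finset.mem_singleton, not_or] at hk
      exact ⟨hI.second_le k hk.1, hI.le_penult k hk.2⟩,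
    Finset.sum_pair hI.first_lt_last.ne, hleft _ _ (hb z p (hI.first_le p)),
    hright _ _ (ha o q hI.second_lt_last.le)]

end Corner

section Parts

variable {n : ℕ} {K : Type} [Ring K] {J : TwoSidedIdeal K} {z o p q : Fin n}

def alphaPart (z p q : Fin n) (α : K → K) (M : Matrix (Fin n) (Fin n) K) :
    Matrix (Fin n) (Fin n) K :=
  single p z (α (M z q)) + single q z (α (M z p))

def betaPart (z o p q : Fin n) (β : K → K) (M : Matrix (Fin n) (Fin n) K) :
    Matrix (Fin n) (Fin n) K :=
  single p o (β (M z q)) + single q o (β (M z p)) + single q z (β (M o p)) +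
    single p z (β (M o q))

def gammaPart (z o q : Fin n) (γ : K → K) (M : Matrix (Fin n) (Fin n) K) :
    Matrix (Fin n) (Fin n) K :=
  single q o (γ (M z q)) + single q z (γ (M o q))

lemma isAntiDerivationOn_alphaPart {α : K → K} (hadd : ∀ x ∈ J, ∀ y ∈ J, α (x + y) = α x + α y)
    (hann : ∀ y ∈ J, ∀ t ∈ J, α y * t = 0 ∧ t * α y = 0)
    (hsq : ∀ x ∈ J, ∀ y ∈ J, α (x * y) = 0) (hright : ∀ x, ∀ y ∈ J, α (y * x) = x * α y)
    (hI : IsOuterIndices z o p q) : IsAntiDerivationOn (Rset n K J) (alphaPart z p q α) where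
  map_mem _ _ :=
    add_mem (single_mem_Rset_of_lt hI.first_lt_penult _) (single_mem_Rset_of_lt hI.first_lt_last _)
  map_add a ha b hb := by
    have hzq := hI.first_le q
    have hzp := hI.first_le p
    simp only [alphaPart, Matrix.add_apply, hadd _ (ha z q hzq) _ (hb z q hzq),
      hadd _ (ha z p hzp) _ (hb z p hzp), single_add]
    abel
  map_mul a ha b hb := by
    have hzq := hI.first_le q
    have hzp := hI.first_le p
    simp only [alphaPart, mul_add, add_mul, map_mul_apply_first_last hadd hsq hI ha hb,
      map_mul_apply_first_penult hadd hsq hright hI ha hb,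
      mul_single_eq_single_of_mem (fun t ht => (hann _ (ha z q hzq) t ht).2) hb hI.le_penult,
      mul_single_eq_zero_of_mem (fun t ht => (hann _ (ha z p hzp) t ht).2) hb hI.le_last,
      single_mul_eq_zero_of_mem (fun t ht => (hann _ (hb z q hzq) t ht).1) ha hI.first_le,
      single_mul_eq_zero_of_mem (fun t ht => (hann _ (hb z p hzp) t ht).1) ha hI.first_le,
      single_zero]
    abel

lemma isAntiDerivationOn_betaPart {β : K → K} (hadd : ∀ x ∈ J, ∀ y ∈ J, β (x + y) = β x + β y)
    (hann : ∀ y ∈ J, ∀ t ∈ J, β y * t = 0 ∧ t * β y = 0)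
    (hsq : ∀ x ∈ J, ∀ y ∈ J, β (x * y) = 0) (hright : ∀ x, ∀ y ∈ J, β (y * x) = x * β y)
    (hleft : ∀ x, ∀ y ∈ J, β (x * y) = β y * x) (hI : IsOuterIndices z o p q) :
    IsAntiDerivationOn (Rset n K J) (betaPart z o p q β) where
  map_mem _ _ :=
    add_mem (add_mem (add_mem (single_mem_Rset_of_lt hI.second_lt_penult _)
      (single_mem_Rset_of_lt hI.second_lt_last _)) (single_mem_Rset_of_lt hI.first_lt_last _))
      (single_mem_Rset_of_lt hI.first_lt_penult _)
  map_add a ha b hb := by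
    have hzq := hI.first_le q
    have hzp := hI.first_le p
    have hop := hI.second_lt_penult.le
    have hoq := hI.second_lt_last.le
    simp only [betaPart, Matrix.add_apply, hadd _ (ha z q hzq) _ (hb z q hzq),
      hadd _ (ha z p hzp) _ (hb z p hzp), hadd _ (ha o p hop) _ (hb o p hop),
      hadd _ (ha o q hoq) _ (hb o q hoq), single_add]
    abel
  map_mul a ha b hb := by
    have hzq := hI.first_le q
    have hzp := hI.first_le p
    have hop := hI.second_lt_penult.le
    have hoq := hI.second_lt_last.le
    simp only [betaPart, mul_add, add_mul, map_mul_apply_first_last hadd hsq hI ha hb,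
      map_mul_apply_first_penult hadd hsq hright hI ha hb,
      map_mul_apply_second_last hadd hsq hleft hI ha hb,
      map_mul_apply_second_penult hadd hsq hright hleft hI ha hb,
      mul_single_eq_single_of_mem (fun t ht => (hann _ (ha z q hzq) t ht).2) hb hI.le_penult,
      mul_single_eq_zero_of_mem (fun t ht => (hann _ (ha z p hzp) t ht).2) hb hI.le_last,
      mul_single_eq_zero_of_mem (fun t ht => (hann _ (ha o p hop) t ht).2) hb hI.le_last,
      mul_single_eq_single_of_mem (fun t ht => (hann _ (ha o q hoq) t ht).2) hb hI.le_penult,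
      single_mul_eq_single_of_mem (fun t ht => (hann _ (hb z q hzq) t ht).1) ha hI.second_le,
      single_mul_eq_single_of_mem (fun t ht => (hann _ (hb z p hzp) t ht).1) ha hI.second_le,
      single_mul_eq_zero_of_mem (fun t ht => (hann _ (hb o p hop) t ht).1) ha hI.first_le,
      single_mul_eq_zero_of_mem (fun t ht => (hann _ (hb o q hoq) t ht).1) ha hI.first_le,
      single_add, single_zero]
    abel

lemma isAntiDerivationOn_gammaPart {γ : K → K} (hadd : ∀ x ∈ J, ∀ y ∈ J, γ (x + y) = γ x + γ y)
    (hann : ∀ y ∈ J, ∀ t ∈ J, γ y * t = 0 ∧ t * γ y = 0)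
    (hsq : ∀ x ∈ J, ∀ y ∈ J, γ (x * y) = 0) (hleft : ∀ x, ∀ y ∈ J, γ (x * y) = γ y * x)
    (hI : IsOuterIndices z o p q) : IsAntiDerivationOn (Rset n K J) (gammaPart z o q γ) where
  map_mem _ _ :=
    add_mem (single_mem_Rset_of_lt hI.second_lt_last _) (single_mem_Rset_of_lt hI.first_lt_last _)
  map_add a ha b hb := by
    have hzq := hI.first_le q
    have hoq := hI.second_lt_last.le
    simp only [gammaPart, Matrix.add_apply, hadd _ (ha z q hzq) _ (hb z q hzq),
      hadd _ (ha o q hoq) _ (hb o q hoq), single_add]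
    abel
  map_mul a ha b hb := by
    have hzq := hI.first_le q
    have hoq := hI.second_lt_last.le
    simp only [gammaPart, mul_add, add_mul, map_mul_apply_first_last hadd hsq hI ha hb,
      map_mul_apply_second_last hadd hsq hleft hI ha hb,
      mul_single_eq_zero_of_mem (fun t ht => (hann _ (ha z q hzq) t ht).2) hb hI.le_last,
      mul_single_eq_zero_of_mem (fun t ht => (hann _ (ha o q hoq) t ht).2) hb hI.le_last,
      single_mul_eq_single_of_mem (fun t ht => (hann _ (hb z q hzq) t ht).1) ha hI.second_le,
      single_mul_eq_zero_of_mem (fun t ht => (hann _ (hb o q hoq) t ht).1) ha hI.first_le,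
      single_zero]
    abel

end Parts

def extremalMap {n : ℕ} {K : Type} [Ring K] (z o p q : Fin n) (α β γ : K → K) :
    Matrix (Fin n) (Fin n) K → Matrix (Fin n) (Fin n) K :=
  alphaPart z p q α + betaPart z o p q β + gammaPart z o q γ

/-- the extremal map `Ω` is a Jordan derivation of `R_n(K,J)`. -/
theorem extremal_is_jordan_derivation (n : ℕ) (hn : 4 ≤ n) (K : Type) [Ring K]
    (J : TwoSidedIdeal K) (α β γ : K → K)
    (haddα : ∀ y ∈ J, ∀ z ∈ J, α (y + z) = α y + α z)
    (haddβ : ∀ y ∈ J, ∀ z ∈ J, β (y + z) = β y + β z)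
    (haddγ : ∀ y ∈ J, ∀ z ∈ J, γ (y + z) = γ y + γ z)
    (hannα : ∀ y ∈ J, ∀ t ∈ J, α y * t = 0 ∧ t * α y = 0)
    (hannβ : ∀ y ∈ J, ∀ t ∈ J, β y * t = 0 ∧ t * β y = 0)
    (hannγ : ∀ y ∈ J, ∀ t ∈ J, γ y * t = 0 ∧ t * γ y = 0)
    (hsqα : ∀ y ∈ J, ∀ z ∈ J, α (y * z) = 0)
    (hsqβ : ∀ y ∈ J, ∀ z ∈ J, β (y * z) = 0)
    (hsqγ : ∀ y ∈ J, ∀ z ∈ J, γ (y * z) = 0)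
    (hα : ∀ x : K, ∀ y ∈ J, α (y * x) = x * α y)
    (hβ1 : ∀ x : K, ∀ y ∈ J, β (y * x) = x * β y)
    (hβ2 : ∀ x : K, ∀ y ∈ J, β (x * y) = β y * x)
    (hγ : ∀ x : K, ∀ y ∈ J, γ (x * y) = γ y * x) :
    ∃ Ω : ↥(Rset n K J) → ↥(Rset n K J),
      (∀ M : ↥(Rset n K J),
        (↑(Ω M) : Matrix (Fin n) (Fin n) K) =
          Matrix.single ⟨n - 2, by omega⟩ ⟨0, by omega⟩
            (α ((M : Matrix (Fin n) (Fin n) K) ⟨0, by omega⟩ ⟨n - 1, by omega⟩)) +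
          Matrix.single ⟨n - 2, by omega⟩ ⟨1, by omega⟩
            (β ((M : Matrix (Fin n) (Fin n) K) ⟨0, by omega⟩ ⟨n - 1, by omega⟩)) +
          Matrix.single ⟨n - 1, by omega⟩ ⟨1, by omega⟩
            (γ ((M : Matrix (Fin n) (Fin n) K) ⟨0, by omega⟩ ⟨n - 1, by omega⟩)) +
          Matrix.single ⟨n - 1, by omega⟩ ⟨0, by omega⟩
            (α ((M : Matrix (Fin n) (Fin n) K) ⟨0, by omega⟩ ⟨n - 2, by omega⟩)) +
          Matrix.single ⟨n - 1, by omega⟩ ⟨1, by omega⟩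
            (β ((M : Matrix (Fin n) (Fin n) K) ⟨0, by omega⟩ ⟨n - 2, by omega⟩)) +
          Matrix.single ⟨n - 1, by omega⟩ ⟨0, by omega⟩
            (β ((M : Matrix (Fin n) (Fin n) K) ⟨1, by omega⟩ ⟨n - 2, by omega⟩)) +
          Matrix.single ⟨n - 2, by omega⟩ ⟨0, by omega⟩
            (β ((M : Matrix (Fin n) (Fin n) K) ⟨1, by omega⟩ ⟨n - 1, by omega⟩)) +
          Matrix.single ⟨n - 1, by omega⟩ ⟨0, by omega⟩
            (γ ((M : Matrix (Fin n) (Fin n) K) ⟨1, by omega⟩ ⟨n - 1, by omega⟩))) ∧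
      (∀ a b : ↥(Rset n K J), Ω (a + b) = Ω a + Ω b) ∧
      (∀ a b : ↥(Rset n K J),
        Ω (a * b + b * a) = Ω a * b + b * Ω a + a * Ω b + Ω b * a) := by
  have hI : IsOuterIndices (⟨0, by omega⟩ : Fin n) ⟨1, by omega⟩ ⟨n - 2, by omega⟩
      ⟨n - 1, by omega⟩ := by
    refine ⟨fun k => ?_, fun k hk => ?_, fun k hk => ?_, fun k => ?_, ?_⟩ <;>
      simp only [Fin.le_def, Fin.lt_def, ne_eq, Fin.ext_iff] at * <;> omega
  have hΩ := ((isAntiDerivationOn_alphaPart haddα hannα hsqα hα hI).add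
    (isAntiDerivationOn_betaPart haddβ hannβ hsqβ hβ1 hβ2 hI)).add
    (isAntiDerivationOn_gammaPart haddγ hannγ hsqγ hγ hI)
  refine ⟨fun M => ⟨extremalMap _ _ _ _ α β γ M, hΩ.map_mem M M.2⟩, fun M => ?_,
    fun a b => Subtype.ext (hΩ.map_add a a.2 b b.2),
    fun a b => Subtype.ext (hΩ.map_mul_add_mul a.2 b.2)⟩
  simp only [extremalMap, alphaPart, betaPart, gammaPart, Pi.add_apply]
  abel
end

section
/- Let Δ be a Jordan derivation of R = R_n(K,J) with n ≥ 4 and K 2-torsion free. Fix (i,j) and write Δ(x e_{i,j}) = Σ_{s,t} Δ^{i,j}_{s,t}(x) e_{s,t}. If k > s > m with k, s, m all distinct from both i and j, then Δ^{i,j}_{k,k}(x) = Δ^{i,j}_{s,s}(x) = Δ^{i,j}_{m,m}(x) = 0 for all x ∈ I_{i,j}. -/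
open Matrix

lemma stdBasis_mem_lower {n : ℕ} {K : Type} [Ring K] {J : TwoSidedIdeal K}
    {i j : Fin n} (h : j < i) (y : K) :
    Matrix.single i j y ∈ Rset n K J :=
  stdBasis_mem fun hle => absurd hle (not_le.mpr h)

/-
For `q < p` the matrix unit `e_{p,q}` lies in `R`, and if `p, q ∉ {i, j}` it anticommutes with
`x e_{i,j}`. Applying `Δ` to `e_{p,q} · x e_{i,j} + x e_{i,j} · e_{p,q} = 0` and reading off the
`(p,q)` entry gives `Δ^{i,j}_{q,q}(x) + Δ^{i,j}_{p,p}(x) = 0`. For three indices `m < s < k` the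
three pairwise sums vanish, and 2-torsion freeness forces each term to vanish.
-/

theorem eq_zero_of_pairwise_add_eq_zero {G : Type*} [AddLeftCancelMonoid G]
    (htf : ∀ a : G, a + a = 0 → a = 0) {a b c : G}
    (hab : a + b = 0) (hac : a + c = 0) (hbc : b + c = 0) :
    a = 0 ∧ b = 0 ∧ c = 0 := by
  have hbc_eq : b = c := add_left_cancel (hab.trans hac.symm)
  have hc : c = 0 := htf c (hbc_eq ▸ hbc)
  have hb : b = 0 := hbc_eq.trans hc
  exact ⟨by simpa only [hb, add_zero] using hab, hb, hc⟩

theorem jordan_expand_eq_zero_of_anticommute {R : Type*} [NonUnitalNonAssocRing R] (Δ : R → R)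
    (hadd : ∀ a b : R, Δ (a + b) = Δ a + Δ b)
    (hjord : ∀ a b : R, Δ (a * b + b * a) = Δ a * b + b * Δ a + a * Δ b + Δ b * a)
    {a b : R} (h : a * b + b * a = 0) :
    Δ a * b + b * Δ a + a * Δ b + Δ b * a = 0 := by
  have hzero : Δ 0 = 0 := by simpa using hadd 0 0
  rw [← hjord, h, hzero]

section MatrixUnits

variable {ι K : Type*} [Fintype ι] [DecidableEq ι] [Ring K] {i j p q : ι}

theorem single_anticommute_of_ne (hqi : q ≠ i) (hpj : p ≠ j) (y x : K) :
    single p q y * single i j x + single i j x * single p q y = 0 := by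
  rw [single_mul_single_of_ne (h := hqi), single_mul_single_of_ne (h := hpj.symm), add_zero]

theorem jordan_expand_single_apply (hpi : p ≠ i) (hqj : q ≠ j) (A B : Matrix ι ι K) (x : K) :
    (A * single i j x + single i j x * A + single p q 1 * B + B * single p q 1 : Matrix ι ι K) p q
      = B q q + B p p := by
  simp only [Matrix.add_apply, mul_single_apply_of_ne _ _ _ _ _ hqj,
    single_mul_apply_of_ne _ _ _ _ _ hpi, single_mul_apply_same, mul_single_apply_same,
    one_mul, mul_one, zero_add]

end MatrixUnits

theorem jordan_derivation_diag_add_diag_eq_zero {n : ℕ} {K : Type} [Ring K]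
    {J : TwoSidedIdeal K} (Δ : ↥(Rset n K J) → ↥(Rset n K J))
    (hadd : ∀ a b : ↥(Rset n K J), Δ (a + b) = Δ a + Δ b)
    (hjord : ∀ a b : ↥(Rset n K J),
      Δ (a * b + b * a) = Δ a * b + b * Δ a + a * Δ b + Δ b * a)
    {i j p q : Fin n} (hqp : q < p) (hpi : p ≠ i) (hpj : p ≠ j) (hqi : q ≠ i) (hqj : q ≠ j)
    (x : K) (hx : i ≤ j → x ∈ J) :
    (Δ ⟨single i j x, stdBasis_mem hx⟩ : Matrix (Fin n) (Fin n) K) q q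
      + (Δ ⟨single i j x, stdBasis_mem hx⟩ : Matrix (Fin n) (Fin n) K) p p = 0 := by
  set a : ↥(Rset n K J) := ⟨single p q 1, stdBasis_mem_lower hqp 1⟩
  set b : ↥(Rset n K J) := ⟨single i j x, stdBasis_mem hx⟩
  have hanti : a * b + b * a = 0 :=
    Subtype.ext (single_anticommute_of_ne hqi hpj 1 x)
  have h := congrArg (fun M : ↥(Rset n K J) => (M : Matrix (Fin n) (Fin n) K) p q)
    (jordan_expand_eq_zero_of_anticommute Δ hadd hjord hanti)
  simp only [NonUnitalSubring.val_add, NonUnitalSubring.val_mul, ZeroMemClass.coe_zero,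
    Matrix.zero_apply] at h
  exact (jordan_expand_single_apply hpi hqj _ _ x).symm.trans h

theorem diagonal_coords_vanish_general (n : ℕ) (K : Type) [Ring K]
    (htf : ∀ a : K, a + a = 0 → a = 0) (J : TwoSidedIdeal K)
    (Δ : ↥(Rset n K J) → ↥(Rset n K J))
    (hadd : ∀ a b : ↥(Rset n K J), Δ (a + b) = Δ a + Δ b)
    (hjord : ∀ a b : ↥(Rset n K J),
      Δ (a * b + b * a) = Δ a * b + b * Δ a + a * Δ b + Δ b * a)
    (i j k s m : Fin n) (hms : m < s) (hsk : s < k)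
    (hki : k ≠ i) (hkj : k ≠ j) (hsi : s ≠ i) (hsj : s ≠ j) (hmi : m ≠ i) (hmj : m ≠ j)
    (x : K) (hx : i ≤ j → x ∈ J) :
    (↑(Δ ⟨Matrix.single i j x, stdBasis_mem hx⟩) : Matrix (Fin n) (Fin n) K) k k = 0 ∧
    (↑(Δ ⟨Matrix.single i j x, stdBasis_mem hx⟩) : Matrix (Fin n) (Fin n) K) s s = 0 ∧
    (↑(Δ ⟨Matrix.single i j x, stdBasis_mem hx⟩) : Matrix (Fin n) (Fin n) K) m m = 0 := by
  have hms_sum := jordan_derivation_diag_add_diag_eq_zero Δ hadd hjord hms hsi hsj hmi hmj x hx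
  have hmk_sum := jordan_derivation_diag_add_diag_eq_zero Δ hadd hjord (hms.trans hsk)
    hki hkj hmi hmj x hx
  have hsk_sum := jordan_derivation_diag_add_diag_eq_zero Δ hadd hjord hsk hki hkj hsi hsj x hx
  obtain ⟨hm, hs, hk⟩ := eq_zero_of_pairwise_add_eq_zero htf hms_sum hmk_sum hsk_sum
  exact ⟨hk, hs, hm⟩

/-- vanishing of the diagonal coordinate maps `Δ^{i,j}_{k,k}` for indices
`k > s > m` all distinct from `i` and `j`. -/
theorem diagonal_coords_vanish (n : ℕ) (hn : 4 ≤ n) (K : Type) [Ring K]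
    (htf : ∀ a : K, a + a = 0 → a = 0) (J : TwoSidedIdeal K)
    (Δ : ↥(Rset n K J) → ↥(Rset n K J))
    (hadd : ∀ a b : ↥(Rset n K J), Δ (a + b) = Δ a + Δ b)
    (hjord : ∀ a b : ↥(Rset n K J),
      Δ (a * b + b * a) = Δ a * b + b * Δ a + a * Δ b + Δ b * a)
    (i j k s m : Fin n) (hms : m < s) (hsk : s < k)
    (hki : k ≠ i) (hkj : k ≠ j) (hsi : s ≠ i) (hsj : s ≠ j) (hmi : m ≠ i) (hmj : m ≠ j)
    (x : K) (hx : i ≤ j → x ∈ J) :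
    (↑(Δ ⟨Matrix.single i j x, stdBasis_mem hx⟩) : Matrix (Fin n) (Fin n) K) k k = 0 ∧
    (↑(Δ ⟨Matrix.single i j x, stdBasis_mem hx⟩) : Matrix (Fin n) (Fin n) K) s s = 0 ∧
    (↑(Δ ⟨Matrix.single i j x, stdBasis_mem hx⟩) : Matrix (Fin n) (Fin n) K) m m = 0 :=
  diagonal_coords_vanish_general n K htf J Δ hadd hjord i j k s m hms hsk hki hkj hsi hsj hmi hmj x
    hx
end

section
/- Let Δ be a Jordan derivation of R = R_n(K,J) with n ≥ 4. Then for 1 < i < n−1 and x ∈ K, the matrix Δ(x e_{i+1,i}) has nonzero entries only in row i+1, column i, and position (n,1). -/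
open Matrix

/-!
Write `D_y = Δ(y e_{r,c})` with `c < r`. Whenever `b = k e_{p,q}` satisfies
`e_{r,c} b = b e_{r,c} = 0`, the Jordan identity `0 = Δ(y e_{r,c} b + b y e_{r,c})`, read at a
well-chosen entry, isolates one entry of `D_y`; taking `p = n` or `q = 1` kills every
off-diagonal entry outside row `r`, column `c` and position `(n, 1)`. On the diagonal the same
identity only gives `D_y(S,S) k + k D_y(T,T) = 0`. Combined with the factorisations
`e_{r,1} = e_{r,c} e_{c,1}` and `e_{n,c} = e_{n,r} e_{r,c}` it yields
`2 (k D_y(1,1) + y D_k(1,1)) = 0`, so 2-torsion freeness gives `D_y(1,1) = 0`, and then every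
diagonal entry outside `{r, c}` vanishes.
-/

structure IsJordanDerivation {R : Type*} [NonUnitalNonAssocRing R] (Δ : R → R) : Prop where
  map_add : ∀ a b, Δ (a + b) = Δ a + Δ b
  map_jordan : ∀ a b, Δ (a * b + b * a) = Δ a * b + b * Δ a + a * Δ b + Δ b * a

namespace IsJordanDerivation

variable {R : Type*} [NonUnitalNonAssocRing R] {Δ : R → R}

theorem map_zero (hΔ : IsJordanDerivation Δ) : Δ 0 = 0 := by
  simpa using hΔ.map_add 0 0

theorem jordan_eq_zero_of_mul_eq_zero (hΔ : IsJordanDerivation Δ) {a b : R}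
    (hab : a * b = 0) (hba : b * a = 0) :
    Δ a * b + b * Δ a + a * Δ b + Δ b * a = 0 := by
  rw [← hΔ.map_jordan, hab, hba, add_zero, hΔ.map_zero]

end IsJordanDerivation

section

variable {n : ℕ} {K : Type} [Ring K] {J : TwoSidedIdeal K}

def lowerSingle {i j : Fin n} (h : j < i) (y : K) : Rset n K J :=
  ⟨single i j y, stdBasis_mem_lower h y⟩

@[simp]
theorem coe_lowerSingle {i j : Fin n} (h : j < i) (y : K) :
    (lowerSingle (J := J) h y : Matrix (Fin n) (Fin n) K) = single i j y :=
  rfl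

namespace IsJordanDerivation

variable {Δ : Rset n K J → Rset n K J} (hΔ : IsJordanDerivation Δ)
include hΔ

theorem coe_map_lowerSingle_mul {i j l : Fin n} (hji : j < i) (hlj : l < j) (a b : K) :
    (Δ (lowerSingle (hlj.trans hji) (a * b)) : Matrix (Fin n) (Fin n) K)
      = Δ (lowerSingle hji a) * single j l b + single j l b * Δ (lowerSingle hji a)
        + single i j a * Δ (lowerSingle hlj b) + Δ (lowerSingle hlj b) * single i j a := by
  have hprod : lowerSingle (J := J) (hlj.trans hji) (a * b)
      = lowerSingle hji a * lowerSingle hlj b + lowerSingle hlj b * lowerSingle hji a := by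
    ext : 1
    simp [single_mul_single_of_ne _ _ _ _ (hlj.trans hji).ne]
  rw [hprod, hΔ.map_jordan]
  simp only [NonUnitalSubring.val_add, NonUnitalSubring.val_mul, coe_lowerSingle]

variable {r c : Fin n} (hrc : c < r)

theorem coe_jordan_lowerSingle_eq_zero {p q : Fin n} (hqp : q < p) (hcp : c ≠ p) (hqr : q ≠ r)
    (y k : K) :
    (Δ (lowerSingle hrc y) * single p q k + single p q k * Δ (lowerSingle hrc y)
      + single r c y * Δ (lowerSingle hqp k) + Δ (lowerSingle hqp k) * single r c y
      : Matrix (Fin n) (Fin n) K) = 0 := by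
  have h := hΔ.jordan_eq_zero_of_mul_eq_zero (a := lowerSingle hrc y) (b := lowerSingle hqp k)
    (Subtype.ext (single_mul_single_of_ne _ _ _ _ hcp _))
    (Subtype.ext (single_mul_single_of_ne _ _ _ _ hqr _))
  simpa only [NonUnitalSubring.val_add, NonUnitalSubring.val_mul, coe_lowerSingle,
    ZeroMemClass.coe_zero] using congrArg Subtype.val h

theorem map_lowerSingle_apply_eq_zero_of_row_lt {L S T : Fin n} (hSL : S < L) (hcL : c ≠ L)
    (hLr : L ≠ r) (hSr : S ≠ r) (hTS : T ≠ S) (hTc : T ≠ c) (y : K) :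
    (Δ (lowerSingle hrc y) : Matrix (Fin n) (Fin n) K) S T = 0 := by
  simpa [hTS, hLr, hTc] using
    congr_fun₂ (hΔ.coe_jordan_lowerSingle_eq_zero hrc hSL hcL hSr y 1) L T

theorem map_lowerSingle_apply_eq_zero_of_lt_col {Z S T : Fin n} (hZT : Z < T) (hcT : c ≠ T)
    (hZr : Z ≠ r) (hST : S ≠ T) (hSr : S ≠ r) (hZc : Z ≠ c) (y : K) :
    (Δ (lowerSingle hrc y) : Matrix (Fin n) (Fin n) K) S T = 0 := by
  simpa [hST, hSr, hZc] using
    congr_fun₂ (hΔ.coe_jordan_lowerSingle_eq_zero hrc hZT hcT hZr y 1) S Z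

theorem map_lowerSingle_diag_mul_add_mul_diag {S T : Fin n} (hTS : T < S) (hcS : c ≠ S)
    (hSr : S ≠ r) (hTr : T ≠ r) (hTc : T ≠ c) (y k : K) :
    (Δ (lowerSingle hrc y) : Matrix (Fin n) (Fin n) K) S S * k
      + k * (Δ (lowerSingle hrc y) : Matrix (Fin n) (Fin n) K) T T = 0 := by
  simpa [hSr, hTc] using congr_fun₂ (hΔ.coe_jordan_lowerSingle_eq_zero hrc hTS hcS hTr y k) S T

theorem map_lowerSingle_diag_relation_below {l : Fin n} (hlc : l < c) (y k : K) :
    (Δ (lowerSingle hrc y) : Matrix (Fin n) (Fin n) K) r r * k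
      + k * (Δ (lowerSingle hrc y) : Matrix (Fin n) (Fin n) K) l l
      + y * ((Δ (lowerSingle hrc k) : Matrix (Fin n) (Fin n) K) c c
        + (Δ (lowerSingle hrc k) : Matrix (Fin n) (Fin n) K) l l) = 0 := by
  have hlr := hlc.trans hrc
  have H := congr_fun₂ (hΔ.coe_jordan_lowerSingle_eq_zero hrc hlr hrc.ne hlr.ne y k) r l
  have hchain := congr_fun₂ (hΔ.coe_map_lowerSingle_mul hrc hlc k 1) c l
  simp only [Matrix.add_apply, mul_single_apply_same, single_mul_apply_same, mul_one, one_mul,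
    mul_single_apply_of_ne _ _ _ _ _ hlc.ne, single_mul_apply_of_ne _ _ _ _ _ hrc.ne, add_zero,
    Matrix.zero_apply] at H hchain
  rwa [hchain] at H

theorem map_lowerSingle_diag_relation_above {m : Fin n} (hrm : r < m) (y k : K) :
    (Δ (lowerSingle hrc y) : Matrix (Fin n) (Fin n) K) m m * k
      + k * (Δ (lowerSingle hrc y) : Matrix (Fin n) (Fin n) K) c c
      + ((Δ (lowerSingle hrc k) : Matrix (Fin n) (Fin n) K) r r
        + (Δ (lowerSingle hrc k) : Matrix (Fin n) (Fin n) K) m m) * y = 0 := by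
  have hcm := hrc.trans hrm
  have H := congr_fun₂ (hΔ.coe_jordan_lowerSingle_eq_zero hrc hcm hcm.ne hrc.ne y k) m c
  have hchain := congr_fun₂ (hΔ.coe_map_lowerSingle_mul hrm hrc 1 k) m r
  simp only [Matrix.add_apply, mul_single_apply_same, single_mul_apply_same, mul_one, one_mul,
    single_mul_apply_of_ne _ _ _ _ _ hrm.ne', mul_single_apply_of_ne _ _ _ _ _ hrc.ne', add_zero,
    zero_add, Matrix.zero_apply] at H hchain
  rwa [hchain] at H

variable (htf : ∀ a : K, a + a = 0 → a = 0)
include htf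

theorem map_lowerSingle_diag_cross_eq_zero {l m : Fin n} (hlc : l < c) (hrm : r < m) (y k : K) :
    k * (Δ (lowerSingle hrc y) : Matrix (Fin n) (Fin n) K) l l
      + y * (Δ (lowerSingle hrc k) : Matrix (Fin n) (Fin n) K) l l = 0 := by
  have hlr := hlc.trans hrc
  have hcm := hrc.trans hrm
  have pair (a b : K) := hΔ.map_lowerSingle_diag_mul_add_mul_diag hrc (hlr.trans hrm) hcm.ne
    hrm.ne' hlr.ne hlc.ne a b
  apply htf
  linear_combination (norm := noncomm_ring)
    hΔ.map_lowerSingle_diag_relation_below hrc hlc y k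
      - hΔ.map_lowerSingle_diag_relation_above hrc hrm k y + pair y k + pair k y

theorem map_lowerSingle_diag_eq_zero_of_lt {l m : Fin n} (hlc : l < c) (hrm : r < m) (y : K) :
    (Δ (lowerSingle hrc y) : Matrix (Fin n) (Fin n) K) l l = 0 := by
  have hone : (Δ (lowerSingle hrc 1) : Matrix (Fin n) (Fin n) K) l l = 0 :=
    htf _ (by simpa using hΔ.map_lowerSingle_diag_cross_eq_zero hrc htf hlc hrm 1 1)
  simpa [hone] using hΔ.map_lowerSingle_diag_cross_eq_zero hrc htf hlc hrm y 1

theorem map_lowerSingle_diag_eq_zero {l m S : Fin n} (hlc : l < c) (hrm : r < m) (hSc : S ≠ c)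
    (hSr : S ≠ r) (y : K) :
    (Δ (lowerSingle hrc y) : Matrix (Fin n) (Fin n) K) S S = 0 := by
  have hl := hΔ.map_lowerSingle_diag_eq_zero_of_lt hrc htf hlc hrm y
  have hlr := hlc.trans hrc
  rcases lt_trichotomy S l with hSl | rfl | hlS
  · simpa [hl] using
      hΔ.map_lowerSingle_diag_mul_add_mul_diag hrc hSl hlc.ne' hlr.ne hSr hSc y 1
  · exact hl
  · simpa [hl] using
      hΔ.map_lowerSingle_diag_mul_add_mul_diag hrc hlS hSc.symm hSr hlr.ne hlc.ne y 1

end IsJordanDerivation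

end

/-- Indices are zero-based: `c` is the paper's `i - 1`, and `(n - 1, 0)` is the paper's
position `(n, 1)`. -/
theorem image_of_subdiagonal_unit (n : ℕ) (K : Type) [Ring K]
    (htf : ∀ a : K, a + a = 0 → a = 0) (J : TwoSidedIdeal K)
    (Δ : ↥(Rset n K J) → ↥(Rset n K J))
    (hadd : ∀ a b : ↥(Rset n K J), Δ (a + b) = Δ a + Δ b)
    (hjord : ∀ a b : ↥(Rset n K J),
      Δ (a * b + b * a) = Δ a * b + b * Δ a + a * Δ b + Δ b * a)
    (c : Fin n) (hc1 : 1 ≤ (c : ℕ)) (hc2 : (c : ℕ) < n - 2) (x : K)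
    (s t : Fin n) (hs : (s : ℕ) ≠ (c : ℕ) + 1) (ht : t ≠ c)
    (hnot : ¬ ((s : ℕ) = n - 1 ∧ (t : ℕ) = 0)) :
    (↑(Δ ⟨Matrix.single ⟨(c : ℕ) + 1, by omega⟩ c x,
        stdBasis_mem_lower (by simp only [Fin.lt_def]; omega) x⟩) :
      Matrix (Fin n) (Fin n) K) s t = 0 := by
  have hΔ : IsJordanDerivation Δ := ⟨hadd, hjord⟩
  let r : Fin n := ⟨(c : ℕ) + 1, by omega⟩
  let first : Fin n := ⟨0, by omega⟩
  let last : Fin n := ⟨n - 1, by omega⟩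
  have hrc : c < r := Fin.lt_def.2 (Nat.lt_succ_self c)
  have hfc : first < c := Fin.lt_def.2 (show 0 < (c : ℕ) by omega)
  have hrl : r < last := Fin.lt_def.2 (show (c : ℕ) + 1 < n - 1 by omega)
  have hsr : s ≠ r := Fin.ne_of_val_ne hs
  change (Δ (lowerSingle hrc x) : Matrix (Fin n) (Fin n) K) s t = 0
  by_cases hst : s = t
  · subst hst
    exact hΔ.map_lowerSingle_diag_eq_zero hrc htf hfc hrl ht hsr x
  by_cases hsl : (s : ℕ) = n - 1
  · have hft : first < t := Fin.lt_def.2 (show 0 < (t : ℕ) by omega)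
    exact hΔ.map_lowerSingle_apply_eq_zero_of_lt_col hrc hft (Ne.symm ht)
      (hfc.trans hrc).ne hst hsr hfc.ne x
  · have hsl : s < last := Fin.lt_def.2 (show (s : ℕ) < n - 1 by omega)
    exact hΔ.map_lowerSingle_apply_eq_zero_of_row_lt hrc hsl (hrc.trans hrl).ne hrl.ne'
      hsr (Ne.symm hst) ht x
end

section
/- Let α₁, α₂ : J → Ann_K J be additive maps with α₁(J²) = α₂(J²) = 0, α₁(xy) = α₁(y)x, and α₂(yx) = xα₂(y) for all x ∈ K, y ∈ J. Then the additive map on R_3(K,J) defined by y e_{1,3} ↦ α₁(y)e_{3,2} + α₂(y)e_{2,1}, y e_{1,2} ↦ α₂(y)e_{3,1}, y e_{2,3} ↦ α₁(y)e_{3,1}, and zero on all other elementary matrices, is a Jordan derivation of R_3(K,J). -/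
/-!
The map Ω of (A2) is in fact an antiderivation, Ω(MN) = Ω(N)M + NΩ(M), from which the
Jordan identity for MN + NM follows at once. Ω(M) is strictly lower triangular with entries
in Ann J, so its products with elements of R₃(K,J) keep only the entry at (3,1):
Ω(M)N = α₁(m₁₃)n₂₁ e₃₁ and NΩ(M) = n₃₂α₂(m₁₃) e₃₁. On the other side, every term of
(MN)₁₃, and all but one term of (MN)₁₂ and (MN)₂₃, lies in J², which α₁ and α₂ kill since
α₁(xy) = α₁(y)x and α₂(xy) = yα₂(x) with α₁(y), α₂(x) ∈ Ann J; the remaining terms m₁₃n₃₂ and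
m₂₁n₁₃ contribute n₃₂α₂(m₁₃) and α₁(n₁₃)m₂₁, the (3,1) entries of NΩ(M) and Ω(N)M.
-/

open Matrix

section

variable {K : Type} [Ring K] {J : TwoSidedIdeal K}

lemma map_sum_of_additiveOn {ι : Type*} {f : K → K}
    (hadd : ∀ y ∈ J, ∀ z ∈ J, f (y + z) = f y + f z) (s : Finset ι) {g : ι → K}
    (hg : ∀ i ∈ s, g i ∈ J) : f (∑ i ∈ s, g i) = ∑ i ∈ s, f (g i) := by
  induction s using Finset.cons_induction with
  | empty =>
    have h0 := hadd 0 J.zero_mem 0 J.zero_mem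
    rw [add_zero, left_eq_add] at h0
    simpa using h0
  | cons a s ha ih =>
    rw [Finset.forall_mem_cons] at hg
    rw [Finset.sum_cons, Finset.sum_cons, hadd _ hg.1 _ (J.finsetSum_mem _ _ hg.2), ih hg.2]

lemma apply_mul_eq_zero₁ {f : K → K} (hann : ∀ y ∈ J, ∀ t ∈ J, f y * t = 0 ∧ t * f y = 0)
    (hmul : ∀ x : K, ∀ y ∈ J, f (x * y) = f y * x) {x y : K} (hx : x ∈ J) (hy : y ∈ J) :
    f (x * y) = 0 := by
  rw [hmul x y hy, (hann y hy x hx).1]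

lemma apply_mul_eq_zero₂ {f : K → K} (hann : ∀ y ∈ J, ∀ t ∈ J, f y * t = 0 ∧ t * f y = 0)
    (hmul : ∀ x : K, ∀ y ∈ J, f (y * x) = x * f y) {x y : K} (hx : x ∈ J) (hy : y ∈ J) :
    f (x * y) = 0 := by
  rw [hmul y x hx, (hann x hx y hy).2]

end

lemma apply_mul_add_mul_of_antiderivation {R : Type*} [NonUnitalNonAssocSemiring R] {D : R → R}
    (hadd : ∀ a b, D (a + b) = D a + D b) (hmul : ∀ a b, D (a * b) = D b * a + b * D a)
    (a b : R) : D (a * b + b * a) = D a * b + b * D a + a * D b + D b * a := by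
  rw [hadd, hmul, hmul]
  abel

/-- The map (A2) with 0-based indices: `M 0 2`, `M 0 1`, `M 1 2` are the coefficients of
`e₁₃`, `e₁₂`, `e₂₃`, and `single 2 1` is `e₃₂`. -/
def omegaA2 {K : Type} [AddZeroClass K] (α₁ α₂ : K → K) (M : Matrix (Fin 3) (Fin 3) K) :
    Matrix (Fin 3) (Fin 3) K :=
  single (2 : Fin 3) (1 : Fin 3) (α₁ (M 0 2)) + single 1 0 (α₂ (M 0 2)) + single 2 0 (α₂ (M 0 1)) +
    single 2 0 (α₁ (M 1 2))

section

variable {K : Type} [Ring K] {J : TwoSidedIdeal K} {α₁ α₂ : K → K}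
  {M N : Matrix (Fin 3) (Fin 3) K}

lemma omegaA2_mem (α₁ α₂ : K → K) (M : Matrix (Fin 3) (Fin 3) K) :
    omegaA2 α₁ α₂ M ∈ Rset 3 K J := by
  refine add_mem (add_mem (add_mem ?_ ?_) ?_) ?_ <;>
    exact stdBasis_mem fun h => absurd h (by decide)

lemma omegaA2_add (hadd₁ : ∀ y ∈ J, ∀ z ∈ J, α₁ (y + z) = α₁ y + α₁ z)
    (hadd₂ : ∀ y ∈ J, ∀ z ∈ J, α₂ (y + z) = α₂ y + α₂ z)
    (hM : M ∈ Rset 3 K J) (hN : N ∈ Rset 3 K J) :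
    omegaA2 α₁ α₂ (M + N) = omegaA2 α₁ α₂ M + omegaA2 α₁ α₂ N := by
  simp only [omegaA2, Matrix.add_apply, hadd₁ _ (hM 0 2 (by decide)) _ (hN 0 2 (by decide)),
    hadd₂ _ (hM 0 2 (by decide)) _ (hN 0 2 (by decide)),
    hadd₂ _ (hM 0 1 (by decide)) _ (hN 0 1 (by decide)),
    hadd₁ _ (hM 1 2 (by decide)) _ (hN 1 2 (by decide)), single_add]
  abel

lemma omegaA2_mul_eq_single (hann₁ : ∀ y ∈ J, ∀ t ∈ J, α₁ y * t = 0 ∧ t * α₁ y = 0)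
    (hann₂ : ∀ y ∈ J, ∀ t ∈ J, α₂ y * t = 0 ∧ t * α₂ y = 0)
    (hM : M ∈ Rset 3 K J) (hN : N ∈ Rset 3 K J) :
    omegaA2 α₁ α₂ M * N = single 2 0 (α₁ (M 0 2) * N 1 0) := by
  have h₁ : ∀ i j, i ≤ j → ∀ k l, k ≤ l → α₁ (M i j) * N k l = 0 :=
    fun i j hij k l hkl => (hann₁ _ (hM i j hij) _ (hN k l hkl)).1
  have h₂ : ∀ i j, i ≤ j → ∀ k l, k ≤ l → α₂ (M i j) * N k l = 0 :=
    fun i j hij k l hkl => (hann₂ _ (hM i j hij) _ (hN k l hkl)).1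
  ext i j
  fin_cases i <;> fin_cases j <;>
    simp [omegaA2, mul_apply, Fin.sum_univ_three, single, add_mul, h₁, h₂]

lemma mul_omegaA2_eq_single (hann₁ : ∀ y ∈ J, ∀ t ∈ J, α₁ y * t = 0 ∧ t * α₁ y = 0)
    (hann₂ : ∀ y ∈ J, ∀ t ∈ J, α₂ y * t = 0 ∧ t * α₂ y = 0)
    (hM : M ∈ Rset 3 K J) (hN : N ∈ Rset 3 K J) :
    N * omegaA2 α₁ α₂ M = single 2 0 (N 2 1 * α₂ (M 0 2)) := by
  have h₁ : ∀ i j, i ≤ j → ∀ k l, k ≤ l → N k l * α₁ (M i j) = 0 :=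
    fun i j hij k l hkl => (hann₁ _ (hM i j hij) _ (hN k l hkl)).2
  have h₂ : ∀ i j, i ≤ j → ∀ k l, k ≤ l → N k l * α₂ (M i j) = 0 :=
    fun i j hij k l hkl => (hann₂ _ (hM i j hij) _ (hN k l hkl)).2
  ext i j
  fin_cases i <;> fin_cases j <;>
    simp [omegaA2, mul_apply, Fin.sum_univ_three, single, mul_add, h₁, h₂]

lemma omegaA2_mul (hadd₁ : ∀ y ∈ J, ∀ z ∈ J, α₁ (y + z) = α₁ y + α₁ z)
    (hadd₂ : ∀ y ∈ J, ∀ z ∈ J, α₂ (y + z) = α₂ y + α₂ z)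
    (hann₁ : ∀ y ∈ J, ∀ t ∈ J, α₁ y * t = 0 ∧ t * α₁ y = 0)
    (hann₂ : ∀ y ∈ J, ∀ t ∈ J, α₂ y * t = 0 ∧ t * α₂ y = 0)
    (h₁ : ∀ x : K, ∀ y ∈ J, α₁ (x * y) = α₁ y * x)
    (h₂ : ∀ x : K, ∀ y ∈ J, α₂ (y * x) = x * α₂ y)
    (hM : M ∈ Rset 3 K J) (hN : N ∈ Rset 3 K J) :
    omegaA2 α₁ α₂ (M * N) = omegaA2 α₁ α₂ N * M + N * omegaA2 α₁ α₂ M := by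
  have hM0 : ∀ k, M 0 k ∈ J := fun k => hM 0 k (Fin.zero_le k)
  have hN2 : ∀ k, N k 2 ∈ J := fun k => hN k 2 (Fin.le_last k)
  have hsum {f : K → K} (hadd : ∀ y ∈ J, ∀ z ∈ J, f (y + z) = f y + f z) {i j : Fin 3}
      (hmem : ∀ k, M i k * N k j ∈ J) :
      f ((M * N) i j) = f (M i 0 * N 0 j) + f (M i 1 * N 1 j) + f (M i 2 * N 2 j) := by
    rw [mul_apply, map_sum_of_additiveOn hadd _ fun k _ => hmem k, Fin.sum_univ_three]
  have hmem₀ : ∀ j k, M 0 k * N k j ∈ J := fun j k => J.mul_mem_right _ _ (hM0 k)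
  have hmem₂ : ∀ i k, M i k * N k 2 ∈ J := fun i k => J.mul_mem_left _ _ (hN2 k)
  have e₁ : α₁ ((M * N) 0 2) = 0 := by
    simp only [hsum hadd₁ (hmem₀ 2), apply_mul_eq_zero₁ hann₁ h₁ (hM0 _) (hN2 _), add_zero]
  have e₂ : α₂ ((M * N) 0 2) = 0 := by
    simp only [hsum hadd₂ (hmem₀ 2), apply_mul_eq_zero₂ hann₂ h₂ (hM0 _) (hN2 _), add_zero]
  have e₃ : α₂ ((M * N) 0 1) = N 2 1 * α₂ (M 0 2) := by
    rw [hsum hadd₂ (hmem₀ 1), apply_mul_eq_zero₂ hann₂ h₂ (hM0 0) (hN 0 1 (by decide)),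
      apply_mul_eq_zero₂ hann₂ h₂ (hM0 1) (hN 1 1 le_rfl), h₂ _ _ (hM0 2), zero_add, zero_add]
  have e₄ : α₁ ((M * N) 1 2) = α₁ (N 0 2) * M 1 0 := by
    rw [hsum hadd₁ (hmem₂ 1), apply_mul_eq_zero₁ hann₁ h₁ (hM 1 1 le_rfl) (hN2 1),
      apply_mul_eq_zero₁ hann₁ h₁ (hM 1 2 (by decide)) (hN2 2), h₁ _ _ (hN2 0), add_zero, add_zero]
  rw [omegaA2_mul_eq_single hann₁ hann₂ hN hM, mul_omegaA2_eq_single hann₁ hann₂ hM hN, omegaA2, e₁, e₂, e₃, e₄,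
    single_zero, single_zero, zero_add, zero_add, add_comm]

end

theorem A2_is_jordan_derivation_general (K : Type) [Ring K] (J : TwoSidedIdeal K)
    (α₁ α₂ : K → K)
    (hadd₁ : ∀ y ∈ J, ∀ z ∈ J, α₁ (y + z) = α₁ y + α₁ z)
    (hadd₂ : ∀ y ∈ J, ∀ z ∈ J, α₂ (y + z) = α₂ y + α₂ z)
    (hann₁ : ∀ y ∈ J, ∀ t ∈ J, α₁ y * t = 0 ∧ t * α₁ y = 0)
    (hann₂ : ∀ y ∈ J, ∀ t ∈ J, α₂ y * t = 0 ∧ t * α₂ y = 0)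
    (h₁ : ∀ x : K, ∀ y ∈ J, α₁ (x * y) = α₁ y * x)
    (h₂ : ∀ x : K, ∀ y ∈ J, α₂ (y * x) = x * α₂ y) :
    ∃ Ω : ↥(Rset 3 K J) → ↥(Rset 3 K J),
      (∀ M : ↥(Rset 3 K J),
        (↑(Ω M) : Matrix (Fin 3) (Fin 3) K) =
          Matrix.single (2 : Fin 3) (1 : Fin 3)
            (α₁ ((M : Matrix (Fin 3) (Fin 3) K) 0 2)) +
          Matrix.single (1 : Fin 3) (0 : Fin 3)
            (α₂ ((M : Matrix (Fin 3) (Fin 3) K) 0 2)) +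
          Matrix.single (2 : Fin 3) (0 : Fin 3)
            (α₂ ((M : Matrix (Fin 3) (Fin 3) K) 0 1)) +
          Matrix.single (2 : Fin 3) (0 : Fin 3)
            (α₁ ((M : Matrix (Fin 3) (Fin 3) K) 1 2))) ∧
      (∀ a b : ↥(Rset 3 K J), Ω (a + b) = Ω a + Ω b) ∧
      (∀ a b : ↥(Rset 3 K J),
        Ω (a * b + b * a) = Ω a * b + b * Ω a + a * Ω b + Ω b * a) := by
  let Ω : ↥(Rset 3 K J) → ↥(Rset 3 K J) := fun M => ⟨omegaA2 α₁ α₂ M, omegaA2_mem α₁ α₂ M⟩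
  have hadd : ∀ a b, Ω (a + b) = Ω a + Ω b :=
    fun a b => Subtype.ext (omegaA2_add hadd₁ hadd₂ a.2 b.2)
  have hmul : ∀ a b, Ω (a * b) = Ω b * a + b * Ω a :=
    fun a b => Subtype.ext (omegaA2_mul hadd₁ hadd₂ hann₁ hann₂ h₁ h₂ a.2 b.2)
  exact ⟨Ω, fun _ => rfl, hadd, apply_mul_add_mul_of_antiderivation hadd hmul⟩

/-- the construction (A2) gives a Jordan derivation of `R_3(K,J)`. -/
theorem A2_is_jordan_derivation (K : Type) [Ring K]
    (htf : ∀ a : K, a + a = 0 → a = 0) (J : TwoSidedIdeal K)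
    (α₁ α₂ : K → K)
    (hadd₁ : ∀ y ∈ J, ∀ z ∈ J, α₁ (y + z) = α₁ y + α₁ z)
    (hadd₂ : ∀ y ∈ J, ∀ z ∈ J, α₂ (y + z) = α₂ y + α₂ z)
    (hann₁ : ∀ y ∈ J, ∀ t ∈ J, α₁ y * t = 0 ∧ t * α₁ y = 0)
    (hann₂ : ∀ y ∈ J, ∀ t ∈ J, α₂ y * t = 0 ∧ t * α₂ y = 0)
    (hsq₁ : ∀ y ∈ J, ∀ z ∈ J, α₁ (y * z) = 0)
    (hsq₂ : ∀ y ∈ J, ∀ z ∈ J, α₂ (y * z) = 0)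
    (h₁ : ∀ x : K, ∀ y ∈ J, α₁ (x * y) = α₁ y * x)
    (h₂ : ∀ x : K, ∀ y ∈ J, α₂ (y * x) = x * α₂ y) :
    ∃ Ω : ↥(Rset 3 K J) → ↥(Rset 3 K J),
      (∀ M : ↥(Rset 3 K J),
        (↑(Ω M) : Matrix (Fin 3) (Fin 3) K) =
          Matrix.single (2 : Fin 3) (1 : Fin 3)
            (α₁ ((M : Matrix (Fin 3) (Fin 3) K) 0 2)) +
          Matrix.single (1 : Fin 3) (0 : Fin 3)
            (α₂ ((M : Matrix (Fin 3) (Fin 3) K) 0 2)) +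
          Matrix.single (2 : Fin 3) (0 : Fin 3)
            (α₂ ((M : Matrix (Fin 3) (Fin 3) K) 0 1)) +
          Matrix.single (2 : Fin 3) (0 : Fin 3)
            (α₁ ((M : Matrix (Fin 3) (Fin 3) K) 1 2))) ∧
      (∀ a b : ↥(Rset 3 K J), Ω (a + b) = Ω a + Ω b) ∧
      (∀ a b : ↥(Rset 3 K J),
        Ω (a * b + b * a) = Ω a * b + b * Ω a + a * Ω b + Ω b * a) :=
  A2_is_jordan_derivation_general K J α₁ α₂ hadd₁ hadd₂ hann₁ hann₂ h₁ h₂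
end
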